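/- Let Γ > 0 and let K : [0,1] → ℝ be continuous, nonnegative, continuously differentiable on [0,1), with K(1) = 0 and K'(θ) → −∞ as θ → 1⁻. Let S ∈ (0,∞], let ω : [0,S) → ℝ be continuous, solve the precipitation integral equation on [0,S), and possess an infinite ring structure x₀ = 0 < x₁ < x₂ < ⋯ with sup_i x_i = S. Then x_{2n}/x_{2n+1} → 1 as n → ∞ and the widths of the precipitation rings shrink to zero: x_{2n+1} − x_{2n} → 0 as n → ∞. -/

import Mathlib

open MeasureTheory Set Filter Topology ENNReal

/-- Near 1, the steep decrease of `K'` forces `K θ ≥ M (1 - θ)` for any `M`. -/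
lemma K_lower_bound (K K' : ℝ → ℝ)
    (hKcont : ContinuousOn K (Icc 0 1))
    (hK1 : K 1 = 0)
    (hK' : ∀ θ ∈ Ico (0:ℝ) 1, HasDerivWithinAt K (K' θ) (Ico 0 1) θ)
    (hK'lim : Tendsto K' (nhdsWithin 1 (Iio 1)) atBot) (M : ℝ) :
    ∃ a' : ℝ, 0 ≤ a' ∧ a' < 1 ∧ ∀ θ, a' ≤ θ → θ < 1 → M * (1 - θ) ≤ K θ := by
  have hs : {θ : ℝ | K' θ ≤ -M} ∈ 𝓝[<] (1:ℝ) := hK'lim.eventually (eventually_le_atBot (-M))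
  rw [mem_nhdsLT_iff_exists_Ioo_subset] at hs
  obtain ⟨a, ha1, hsub⟩ := hs
  have ha1' : a < 1 := ha1
  refine ⟨max a 0, le_max_right _ _, max_lt ha1' one_pos, ?_⟩
  set a' := max a 0 with ha'
  have ha'0 : (0:ℝ) ≤ a' := le_max_right a 0
  have hanti : AntitoneOn (fun t => K t - M * (1 - t)) (Icc a' 1) := by
    apply antitoneOn_of_deriv_nonpos (convex_Icc a' 1)
    · exact (hKcont.mono (Icc_subset_Icc ha'0 le_rfl)).sub
        (continuous_const.mul (continuous_const.sub continuous_id)).continuousOn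
    · intro t ht
      rw [interior_Icc] at ht
      have ht0 : (0:ℝ) < t := lt_of_le_of_lt ha'0 ht.1
      have hd : HasDerivAt K (K' t) t :=
        (hK' t ⟨ht0.le, ht.2⟩).hasDerivAt
          (mem_of_superset (isOpen_Ioo.mem_nhds ⟨ht0, ht.2⟩) Ioo_subset_Ico_self)
      exact (hd.sub (((hasDerivAt_id t).const_sub 1).const_mul M)).differentiableAt.differentiableWithinAt
    · intro t ht
      rw [interior_Icc] at ht
      have ht0 : (0:ℝ) < t := lt_of_le_of_lt ha'0 ht.1
      have hd : HasDerivAt K (K' t) t :=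
        (hK' t ⟨ht0.le, ht.2⟩).hasDerivAt
          (mem_of_superset (isOpen_Ioo.mem_nhds ⟨ht0, ht.2⟩) Ioo_subset_Ico_self)
      have hd2 : HasDerivAt (fun t => K t - M * (1 - t)) (K' t - M * (-1)) t :=
        hd.sub (((hasDerivAt_id t).const_sub 1).const_mul M)
      rw [hd2.deriv]
      have hKt : K' t ≤ -M := hsub ⟨lt_of_le_of_lt (le_max_left a 0) ht.1, ht.2⟩
      linarith
  intro θ hθ1 hθ2
  have := hanti ⟨hθ1, hθ2.le⟩ (right_mem_Icc.2 (by linarith)) hθ2.le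
  simp only [hK1] at this
  linarith

/-- The key integral estimate at a zero of `ω` lying above a positive ring. -/
lemma ring_integral_estimate (Γ : ℝ) (hΓ : 0 < Γ) (K : ℝ → ℝ)
    (hKnonneg : ∀ θ ∈ Icc (0:ℝ) 1, 0 ≤ K θ) (hK1 : K 1 = 0)
    (ω : ℝ → ℝ) (y xl M a' : ℝ) (hy : 0 < y) (hxly : xl < y)
    (ha'0 : 0 ≤ a') (ha'1 : a' < 1)
    (hKM : ∀ θ, a' ≤ θ → θ < 1 → M * (1 - θ) ≤ K θ)
    (hpos : ∀ z, xl < z → z < y → 0 < ω z)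
    (heq : Γ = y ^ 2 * ∫ θ in (0:ℝ)..1, K θ * (if 0 < ω (y * θ) then (1:ℝ) else 0)) :
    y ^ 2 * (M * (1 - max (xl / y) a') ^ 2 / 2) ≤ Γ := by
  set f : ℝ → ℝ := fun θ => K θ * (if 0 < ω (y * θ) then (1:ℝ) else 0) with hf
  set c : ℝ := max (xl / y) a' with hc
  have hc0 : 0 ≤ c := le_trans ha'0 (le_max_right _ _)
  have hc1 : c < 1 := max_lt (by rw [div_lt_one hy]; exact hxly) ha'1
  have hIne : (∫ θ in (0:ℝ)..1, f θ) ≠ 0 := by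
    intro h; rw [h, mul_zero] at heq; exact hΓ.ne' heq
  have hInt : IntervalIntegrable f volume 0 1 := by
    by_contra h; exact hIne (intervalIntegral.integral_undef h)
  have hsub1 : uIcc (0:ℝ) c ⊆ uIcc (0:ℝ) 1 := by
    rw [uIcc_of_le hc0, uIcc_of_le zero_le_one]; exact Icc_subset_Icc le_rfl hc1.le
  have hsub2 : uIcc c (1:ℝ) ⊆ uIcc (0:ℝ) 1 := by
    rw [uIcc_of_le hc1.le, uIcc_of_le zero_le_one]; exact Icc_subset_Icc hc0 le_rfl
  have hInt1 := hInt.mono_set hsub1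
  have hInt2 := hInt.mono_set hsub2
  have hfnonneg : ∀ θ ∈ Icc (0:ℝ) 1, 0 ≤ f θ := fun θ hθ =>
    mul_nonneg (hKnonneg θ hθ) (by split <;> norm_num)
  have hsplit : (∫ θ in (0:ℝ)..c, f θ) + (∫ θ in c..(1:ℝ), f θ) = ∫ θ in (0:ℝ)..1, f θ :=
    intervalIntegral.integral_add_adjacent_intervals hInt1 hInt2
  have h0c : 0 ≤ ∫ θ in (0:ℝ)..c, f θ :=
    intervalIntegral.integral_nonneg hc0 fun θ hθ => hfnonneg θ ⟨hθ.1, hθ.2.trans hc1.le⟩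
  have hae : (fun θ => M * (1 - θ)) ≤ᵐ[volume.restrict (Icc c 1)] f := by
    have h1 : ∀ᵐ θ : ℝ, θ ≠ c := by
      rw [ae_iff]
      simp only [ne_eq, not_not, setOf_eq_eq_singleton]
      exact Real.volume_singleton
    filter_upwards [ae_restrict_mem measurableSet_Icc, ae_restrict_of_ae h1] with θ hθ hθc
    rcases eq_or_lt_of_le hθ.2 with h1' | h1'
    · simp only [hf, h1', hK1, zero_mul, sub_self, mul_zero, le_refl]
    · have hθc' : c < θ := lt_of_le_of_ne hθ.1 (Ne.symm hθc)
      have hind : 0 < ω (y * θ) := by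
        apply hpos
        · calc xl = (xl / y) * y := by field_simp
            _ < θ * y := by
              apply mul_lt_mul_of_pos_right _ hy
              exact lt_of_le_of_lt (le_max_left _ _) hθc'
            _ = y * θ := mul_comm _ _
        · calc y * θ < y * 1 := mul_lt_mul_of_pos_left h1' hy
            _ = y := mul_one y
      have : f θ = K θ := by simp [hf, hind]
      rw [this]
      exact hKM θ (le_trans (le_max_right _ _) hθc'.le) h1'
  have hgint : IntervalIntegrable (fun θ => M * (1 - θ)) volume c 1 := by
    apply Continuous.intervalIntegrable; continuity
  have hlow : (∫ θ in c..(1:ℝ), M * (1 - θ)) ≤ ∫ θ in c..(1:ℝ), f θ :=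
    intervalIntegral.integral_mono_ae_restrict hc1.le hgint hInt2 hae
  have hcomp : (∫ θ in c..(1:ℝ), M * (1 - θ)) = M * (1 - c) ^ 2 / 2 := by
    rw [intervalIntegral.integral_const_mul,
      intervalIntegral.integral_sub intervalIntegrable_const intervalIntegral.intervalIntegrable_id,
      intervalIntegral.integral_const, integral_id]
    simp only [smul_eq_mul]
    ring
  have hfinal : M * (1 - c) ^ 2 / 2 ≤ ∫ θ in (0:ℝ)..1, f θ := by
    rw [← hsplit, ← hcomp]; linarith
  calc y ^ 2 * (M * (1 - c) ^ 2 / 2) ≤ y ^ 2 * ∫ θ in (0:ℝ)..1, f θ :=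
        mul_le_mul_of_nonneg_left hfinal (sq_nonneg y)
    _ = Γ := heq.symm

/-- For an infinite ring structure filling the domain [0,S), the
ratios x_{2n}/x_{2n+1} tend to 1 and the ring widths x_{2n+1} - x_{2n} tend to 0. -/
theorem ring_widths_shrink
    (Γ : ℝ) (hΓ : 0 < Γ) (K K' : ℝ → ℝ)
    (hKcont : ContinuousOn K (Icc 0 1))
    (hKnonneg : ∀ θ ∈ Icc (0:ℝ) 1, 0 ≤ K θ)
    (hK1 : K 1 = 0)
    (hK' : ∀ θ ∈ Ico (0:ℝ) 1, HasDerivWithinAt K (K' θ) (Ico 0 1) θ)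
    (hK'cont : ContinuousOn K' (Ico 0 1))
    (hK'lim : Tendsto K' (nhdsWithin 1 (Iio 1)) atBot)
    (S : ℝ≥0∞) (hS : 0 < S)
    (ω : ℝ → ℝ)
    (hωcont : ContinuousOn ω {y : ℝ | 0 ≤ y ∧ ENNReal.ofReal y < S})
    (hωeq : ∀ y : ℝ, 0 ≤ y → ENNReal.ofReal y < S →
      ω y = Γ - y ^ 2 * ∫ θ in (0:ℝ)..1, K θ * (if 0 < ω (y * θ) then (1:ℝ) else 0))
    (x : ℕ → ℝ) (hx : StrictMono x) (hx0 : x 0 = 0)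
    (hxdom : ∀ i, ENNReal.ofReal (x i) < S)
    (hxzero : ∀ i, 1 ≤ i → ω (x i) = 0)
    (hpos : ∀ j, ∀ y ∈ Ioo (x (2 * j)) (x (2 * j + 1)), 0 < ω y)
    (hneg : ∀ j, ∀ y ∈ Ioo (x (2 * j + 1)) (x (2 * j + 2)), ω y < 0)
    (hsup : (⨆ i, ENNReal.ofReal (x i)) = S) :
    Tendsto (fun n => x (2 * n) / x (2 * n + 1)) atTop (nhds 1) ∧
    Tendsto (fun n => x (2 * n + 1) - x (2 * n)) atTop (nhds 0) := by
  have hxnn : ∀ i, 0 ≤ x i := fun i => hx0 ▸ hx.monotone (Nat.zero_le i)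
  have hypos : ∀ n : ℕ, 0 < x (2 * n + 1) := fun n => hx0 ▸ hx (Nat.succ_pos _)
  have hxlxy : ∀ n : ℕ, x (2 * n) < x (2 * n + 1) := fun n => hx (Nat.lt_succ_self _)
  by_cases htop : S = ⊤
  · -- infinite domain: x n → ∞
    subst htop
    have hxtop : Tendsto x atTop atTop := by
      apply tendsto_atTop_atTop_of_monotone hx.monotone
      intro b
      by_contra hb
      push_neg at hb
      have hle : (⨆ i, ENNReal.ofReal (x i)) ≤ ENNReal.ofReal b :=
        iSup_le fun i => ENNReal.ofReal_le_ofReal (hb i).le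
      rw [hsup] at hle
      exact (lt_irrefl _ (lt_of_le_of_lt hle ENNReal.ofReal_lt_top))
    have h2n1 : Tendsto (fun n : ℕ => x (2 * n + 1)) atTop atTop :=
      hxtop.comp (tendsto_atTop_atTop.2 fun b => ⟨b, fun a ha => by omega⟩)
    -- key eventual width bound
    have key : ∀ ε : ℝ, 0 < ε → ∀ᶠ n in atTop, x (2 * n + 1) - x (2 * n) < ε := by
      intro ε hε
      set M : ℝ := 8 * Γ / ε ^ 2 with hM
      have hMpos : 0 < M := by positivity
      obtain ⟨a', ha'0, ha'1, hKM⟩ := K_lower_bound K K' hKcont hK1 hK' hK'lim M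
      have hδ : 0 < 1 - a' := by linarith
      filter_upwards [h2n1.eventually_gt_atTop (ε / (2 * (1 - a')))] with n hn
      set y := x (2 * n + 1) with hyd
      set xl := x (2 * n) with hxld
      have hy : 0 < y := hypos n
      have hxly : xl < y := hxlxy n
      have heq : Γ = y ^ 2 * ∫ θ in (0:ℝ)..1, K θ * (if 0 < ω (y * θ) then (1:ℝ) else 0) := by
        have h0 := hωeq y (hxnn _) ENNReal.ofReal_lt_top
        have hz : ω y = 0 := hxzero (2 * n + 1) (by omega)
        rw [hz] at h0
        linarith
      have hposn : ∀ z, xl < z → z < y → 0 < ω z := fun z h1 h2 => hpos n z ⟨h1, h2⟩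
      have hest := ring_integral_estimate Γ hΓ K hKnonneg hK1 ω y xl M a' hy hxly ha'0 ha'1
        hKM hposn heq
      set c : ℝ := max (xl / y) a' with hcd
      have hc1 : c < 1 := max_lt (by rw [div_lt_one hy]; exact hxly) ha'1
      -- (y * (1 - c))^2 ≤ ε^2/4
      have hsq : (y * (1 - c)) ^ 2 ≤ (ε / 2) ^ 2 := by
        have hA : y ^ 2 * (M * (1 - c) ^ 2 / 2) = M * (y * (1 - c)) ^ 2 / 2 := by ring
        rw [hA] at hest
        have hMe : M * ε ^ 2 = 8 * Γ := by rw [hM]; field_simp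
        nlinarith [hest, hMpos, hMe]
      have hyc : y * (1 - c) ≤ ε / 2 := by
        nlinarith [mul_nonneg hy.le (by linarith : (0:ℝ) ≤ 1 - c), hε]
      rcases le_total a' (xl / y) with hcase | hcase
      · have hceq : c = xl / y := max_eq_left hcase
        have : y * (1 - c) = y - xl := by
          rw [hceq]; field_simp
        linarith
      · have hceq : c = a' := max_eq_right hcase
        exfalso
        rw [hceq] at hyc
        rw [div_lt_iff₀ (by positivity)] at hn
        nlinarith
    have hwidth : Tendsto (fun n => x (2 * n + 1) - x (2 * n)) atTop (nhds 0) := by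
      rw [Metric.tendsto_atTop]
      intro ε hε
      obtain ⟨N, hN⟩ := (eventually_atTop).1 (key ε hε)
      refine ⟨N, fun n hn => ?_⟩
      have h1 := hN n hn
      have h2 : 0 < x (2 * n + 1) - x (2 * n) := sub_pos.2 (hxlxy n)
      rw [Real.dist_eq, sub_zero, abs_of_pos h2]
      exact h1
    refine ⟨?_, hwidth⟩
    have hinv : Tendsto (fun n : ℕ => (x (2 * n + 1))⁻¹) atTop (nhds 0) :=
      h2n1.inv_tendsto_atTop
    have hmul : Tendsto (fun n : ℕ => (x (2 * n + 1) - x (2 * n)) * (x (2 * n + 1))⁻¹)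
        atTop (nhds 0) := by
      have := hwidth.mul hinv
      simpa using this
    have : Tendsto (fun n : ℕ => 1 - (x (2 * n + 1) - x (2 * n)) * (x (2 * n + 1))⁻¹)
        atTop (nhds 1) := by
      have := (tendsto_const_nhds (x := (1:ℝ)) (f := atTop (α := ℕ))).sub hmul
      simpa using this
    apply this.congr
    intro n
    have hy := hypos n
    field_simp
    ring
  · -- finite domain
    have hne : S ≠ ⊤ := htop
    set L := S.toReal with hL
    have hLpos : 0 < L := ENNReal.toReal_pos hS.ne' hne
    have hSL : S = ENNReal.ofReal L := (ENNReal.ofReal_toReal hne).symm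
    have hxlt : ∀ i, x i < L := fun i => by
      have h := hxdom i
      rw [hSL] at h
      exact (ENNReal.ofReal_lt_ofReal_iff hLpos).1 h
    have hbdd : BddAbove (range x) := ⟨L, fun z hz => by
      obtain ⟨i, rfl⟩ := hz; exact (hxlt i).le⟩
    have hlim : Tendsto x atTop (nhds (⨆ i, x i)) := tendsto_atTop_ciSup hx.monotone hbdd
    have hsup0 : 0 ≤ ⨆ i, x i := hx0 ▸ le_ciSup hbdd 0
    have h2 : Tendsto (fun i => ENNReal.ofReal (x i)) atTop (nhds S) := by
      rw [← hsup]
      exact tendsto_atTop_iSup fun i j h => ENNReal.ofReal_le_ofReal (hx.monotone h)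
    have h3 : Tendsto (fun i => ENNReal.ofReal (x i)) atTop
        (nhds (ENNReal.ofReal (⨆ i, x i))) :=
      (ENNReal.continuous_ofReal.tendsto _).comp hlim
    have hsupL : ENNReal.ofReal (⨆ i, x i) = S := tendsto_nhds_unique h3 h2
    have hLeq : (⨆ i, x i) = L := by
      rw [hSL] at hsupL
      exact (ENNReal.ofReal_eq_ofReal_iff hsup0 hLpos.le).1 hsupL
    rw [hLeq] at hlim
    have h2n : Tendsto (fun n : ℕ => x (2 * n)) atTop (nhds L) :=
      hlim.comp (tendsto_atTop_atTop.2 fun b => ⟨b, fun a ha => by omega⟩)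
    have h2n1 : Tendsto (fun n : ℕ => x (2 * n + 1)) atTop (nhds L) :=
      hlim.comp (tendsto_atTop_atTop.2 fun b => ⟨b, fun a ha => by omega⟩)
    constructor
    · have := h2n.div h2n1 hLpos.ne'
      rw [div_self hLpos.ne'] at this
      exact this
    · have := h2n1.sub h2n
      simpa using this
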